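/- Let y* ∈ ℝ^m, A ∈ ℝ^{m×n}, σ > 0, μ_1, …, μ_M ∈ ℝ^n, τ_1, …, τ_M > 0, and positive weights w_1, …, w_M summing to 1. Set Σ_j = σ² I_m + τ_j² A Aᵀ, s_j(y*) = (1/2)(y* − A μ_j)ᵀ Σ_j⁻¹ (y* − A μ_j), ℓ_j(y*) = s_j(y*) + (1/2) log det(Σ_j), w̃_j(y*) = w_j φ(y*; A μ_j, Σ_j) / ∑_i w_i φ(y*; A μ_i, Σ_i), Σ_{post,j} = (τ_j^{−2} I_n + σ^{−2} Aᵀ A)⁻¹, and m_j(y*) = Σ_{post,j}(τ_j^{−2} μ_j + σ^{−2} Aᵀ y*). Let π(· | y*) = ∑_{j=1}^M w̃_j(y*) N(m_j(y*), Σ_{post,j}). Assume (1) 1/C ≤ w_i/w_j ≤ C for all i, j and some C > 1, and (2) there is a unique minimizer j* of ℓ_j(y*) with (ℓ_{(2)}(y*) − ℓ_{(1)}(y*))/m ≥ δ₀ > 0. Then ‖π(· | y*) − N(m_{j*}(y*), Σ_{post,j*})‖_TV ≤ C·M·exp(−m·δ₀). -/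

import Mathlib

/-!
The evidence of the `j`-th component is `φ(y*; A μ_j, Σ_j) = (2π)^(-m/2) e^(-ℓ_j(y*))`, so the
posterior weights are a softmax of `-ℓ` with prior weights `w`, and for `j ≠ j*`
`w̃_j ≤ (w_j / w_{j*}) e^(ℓ_{j*} - ℓ_j) ≤ C e^(-m δ₀)`. Every `N(m_j, Σ_{post,j})` is a probability
measure (write `S = Q Qᵀ` and substitute `v = Q y` in the Gaussian integral), hence
`π(B) - N_{j*}(B) = ∑_{j ≠ j*} w̃_j (N_j(B) - N_{j*}(B))` is at most `∑_{j ≠ j*} w̃_j` in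
absolute value.
-/

open MeasureTheory Matrix Finset

/-- Multivariate Gaussian density `φ(x; μ, S)` on `ℝ^ι`. -/
noncomputable def gaussDensity {ι : Type*} [Fintype ι] [DecidableEq ι]
    (S : Matrix ι ι ℝ) (μ x : ι → ℝ) : ℝ :=
  (2 * Real.pi) ^ (-(Fintype.card ι : ℝ) / 2) * S.det ^ (-(1 : ℝ) / 2) *
    Real.exp (-(1 / 2) * ((x - μ) ⬝ᵥ (S⁻¹ *ᵥ (x - μ))))

/-- The Gaussian probability measure `N(μ, S)` on `ℝ^ι`, given through its
Lebesgue density. -/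
noncomputable def gaussMeasure {ι : Type*} [Fintype ι] [DecidableEq ι]
    (S : Matrix ι ι ℝ) (μ : ι → ℝ) : Measure (ι → ℝ) :=
  volume.withDensity fun x => ENNReal.ofReal (gaussDensity S μ x)

open Real

section PosDef

lemma posDef_smul_one_add_smul_mul_transpose {m n : Type*} [Fintype m] [DecidableEq m]
    [Fintype n] {a b : ℝ} (ha : 0 < a) (hb : 0 ≤ b) (A : Matrix m n ℝ) :
    (a • (1 : Matrix m m ℝ) + b • (A * Aᵀ)).PosDef := by
  have hAAt := posSemidef_self_mul_conjTranspose A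
  rw [conjTranspose_eq_transpose_of_trivial] at hAAt
  exact (PosDef.one.smul ha).add_posSemidef (hAAt.smul hb)

lemma posDef_smul_one_add_smul_transpose_mul {m n : Type*} [Fintype m] [Fintype n]
    [DecidableEq n] {a b : ℝ} (ha : 0 < a) (hb : 0 ≤ b) (A : Matrix m n ℝ) :
    (a • (1 : Matrix n n ℝ) + b • (Aᵀ * A)).PosDef := by
  simpa using posDef_smul_one_add_smul_mul_transpose ha hb Aᵀ

variable {ι : Type*} [Fintype ι] [DecidableEq ι]

open scoped MatrixOrder in
lemma Matrix.PosDef.exists_mul_transpose_eq {S : Matrix ι ι ℝ} (hS : S.PosDef) :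
    ∃ Q : Matrix ι ι ℝ, IsUnit Q.det ∧ Q * Qᵀ = S := by
  obtain ⟨B, hB⟩ := CStarAlgebra.nonneg_iff_eq_star_mul_self.mp hS.posSemidef.nonneg
  have hBtB : Bᵀ * Bᵀᵀ = S := by
    rw [hB, transpose_transpose, star_eq_conjTranspose, conjTranspose_eq_transpose_of_trivial]
  refine ⟨Bᵀ, isUnit_iff_ne_zero.2 fun h => hS.det_pos.ne' ?_, hBtB⟩
  rw [← hBtB, det_mul, h, zero_mul]

lemma dotProduct_inv_mulVec_mulVec_of_mul_transpose_eq {S Q : Matrix ι ι ℝ} (hS : Q * Qᵀ = S)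
    (hQ : IsUnit Q.det) (y : ι → ℝ) : (Q *ᵥ y) ⬝ᵥ (S⁻¹ *ᵥ (Q *ᵥ y)) = y ⬝ᵥ y := by
  subst hS
  rw [Matrix.mul_inv_rev, mulVec_mulVec, dotProduct_mulVec, vecMul_mulVec, Matrix.mul_assoc,
    nonsing_inv_mul Q hQ, Matrix.mul_one, mul_nonsing_inv Qᵀ (by rwa [det_transpose]), vecMul_one]

end PosDef

section ChangeOfVariables

variable {ι : Type*} [Fintype ι] [DecidableEq ι] {Q : Matrix ι ι ℝ}

lemma measurableEmbedding_mulVec (hQ : IsUnit Q.det) : MeasurableEmbedding (Q *ᵥ ·) :=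
  letI := Q.invertibleOfIsUnitDet hQ
  (Q.toLinearEquiv' this).toContinuousLinearEquiv.toHomeomorph.measurableEmbedding

lemma map_mulVec_volume (hQ : IsUnit Q.det) :
    Measure.map (Q *ᵥ ·) volume = ENNReal.ofReal |Q.det⁻¹| • volume :=
  Real.map_matrix_volume_pi_eq_smul_volume_pi hQ.ne_zero

lemma integrable_comp_mulVec_iff {E : Type*} [NormedAddCommGroup E] (hQ : IsUnit Q.det)
    {f : (ι → ℝ) → E} : Integrable (fun y => f (Q *ᵥ y)) ↔ Integrable f := by
  rw [← Function.comp_def, ← (measurableEmbedding_mulVec hQ).integrable_map_iff,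
    map_mulVec_volume hQ]
  exact integrable_smul_measure (by simpa using hQ.ne_zero) ENNReal.ofReal_ne_top

lemma integral_comp_mulVec {E : Type*} [NormedAddCommGroup E] [NormedSpace ℝ E]
    (hQ : IsUnit Q.det) (f : (ι → ℝ) → E) : ∫ y, f (Q *ᵥ y) = |Q.det|⁻¹ • ∫ x, f x := by
  rw [← (measurableEmbedding_mulVec hQ).integral_map, map_mulVec_volume hQ, integral_smul_measure,
    ENNReal.toReal_ofReal (abs_nonneg _), abs_inv]

end ChangeOfVariables

section GaussianIntegral

variable {ι : Type*} [Fintype ι]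

lemma exp_neg_half_dotProduct_self (y : ι → ℝ) :
    exp (-(1 / 2) * (y ⬝ᵥ y)) = ∏ i, exp (-(1 / 2) * y i ^ 2) := by
  simp only [dotProduct, mul_sum, exp_sum, sq]

lemma integrable_exp_neg_half_dotProduct_self :
    Integrable fun y : ι → ℝ => exp (-(1 / 2) * (y ⬝ᵥ y)) := by
  simp_rw [exp_neg_half_dotProduct_self]
  refine Integrable.fintype_prod (f := fun _ t => exp (-(1 / 2) * t ^ 2)) fun _ => ?_
  simpa [neg_mul] using integrable_exp_neg_mul_sq (b := 1 / 2) (by norm_num)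

lemma integral_exp_neg_half_dotProduct_self :
    ∫ y : ι → ℝ, exp (-(1 / 2) * (y ⬝ᵥ y)) = √(2 * π) ^ Fintype.card ι := by
  simp_rw [exp_neg_half_dotProduct_self]
  rw [integral_fintype_prod_volume_eq_pow fun t => exp (-(1 / 2) * t ^ 2)]
  congr 1
  simpa [neg_mul, div_div_eq_mul_div, mul_comm] using integral_gaussian (1 / 2)

variable [DecidableEq ι] {S : Matrix ι ι ℝ}

lemma Matrix.PosDef.integrable_exp_neg_half_dotProduct_inv_mulVec (hS : S.PosDef) :
    Integrable fun v : ι → ℝ => exp (-(1 / 2) * (v ⬝ᵥ (S⁻¹ *ᵥ v))) := by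
  obtain ⟨Q, hQ, hQS⟩ := hS.exists_mul_transpose_eq
  rw [← integrable_comp_mulVec_iff hQ]
  simp_rw [dotProduct_inv_mulVec_mulVec_of_mul_transpose_eq hQS hQ]
  exact integrable_exp_neg_half_dotProduct_self

lemma Matrix.PosDef.integral_exp_neg_half_dotProduct_inv_mulVec (hS : S.PosDef) :
    ∫ v : ι → ℝ, exp (-(1 / 2) * (v ⬝ᵥ (S⁻¹ *ᵥ v))) = √S.det * √(2 * π) ^ Fintype.card ι := by
  obtain ⟨Q, hQ, hQS⟩ := hS.exists_mul_transpose_eq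
  have hdet : √S.det = |Q.det| := by
    rw [← hQS, det_mul, det_transpose, sqrt_mul_self_eq_abs]
  have hcomp := integral_comp_mulVec hQ fun v => exp (-(1 / 2) * (v ⬝ᵥ (S⁻¹ *ᵥ v)))
  simp_rw [dotProduct_inv_mulVec_mulVec_of_mul_transpose_eq hQS hQ,
    integral_exp_neg_half_dotProduct_self, smul_eq_mul] at hcomp
  rw [hcomp, hdet, mul_inv_cancel_left₀ (abs_pos.2 hQ.ne_zero).ne']

end GaussianIntegral

section GaussianMeasure

variable {ι : Type*} [Fintype ι] [DecidableEq ι] {S : Matrix ι ι ℝ}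

lemma gaussDensity_eq_mul_exp (hS : 0 < S.det) (μ x : ι → ℝ) :
    gaussDensity S μ x = (2 * π) ^ (-(Fintype.card ι : ℝ) / 2) *
      exp (-((1 / 2) * ((x - μ) ⬝ᵥ (S⁻¹ *ᵥ (x - μ))) + (1 / 2) * log S.det)) := by
  rw [gaussDensity, rpow_def_of_pos hS, mul_assoc, ← exp_add]
  ring_nf

lemma gaussDensity_pos (hS : S.PosDef) (μ x : ι → ℝ) : 0 < gaussDensity S μ x := by
  rw [gaussDensity_eq_mul_exp hS.det_pos]
  positivity

lemma integrable_gaussDensity (hS : S.PosDef) (μ : ι → ℝ) : Integrable (gaussDensity S μ) := by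
  unfold gaussDensity
  simp_rw [mul_assoc]
  have h := hS.integrable_exp_neg_half_dotProduct_inv_mulVec.comp_sub_right μ
  exact (h.const_mul _).const_mul _

lemma integral_gaussDensity (hS : S.PosDef) (μ : ι → ℝ) : ∫ x, gaussDensity S μ x = 1 := by
  simp_rw [gaussDensity, mul_assoc]
  rw [integral_const_mul, integral_const_mul, integral_sub_right_eq_self
    (fun v => exp (-(1 / 2) * (v ⬝ᵥ (S⁻¹ *ᵥ v)))) μ, hS.integral_exp_neg_half_dotProduct_inv_mulVec]
  have h2π : (2 * π) ^ (-(Fintype.card ι : ℝ) / 2) = (√(2 * π) ^ Fintype.card ι)⁻¹ := by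
    rw [sqrt_eq_rpow, ← rpow_natCast, ← rpow_mul (by positivity), ← rpow_neg (by positivity)]
    ring_nf
  have hdet : S.det ^ (-1 / 2 : ℝ) = (√S.det)⁻¹ := by
    rw [sqrt_eq_rpow, ← rpow_neg hS.det_pos.le]
    norm_num
  have : 0 < √S.det := sqrt_pos.2 hS.det_pos
  rw [h2π, hdet]
  field_simp

lemma isProbabilityMeasure_gaussMeasure (hS : S.PosDef) (μ : ι → ℝ) :
    IsProbabilityMeasure (gaussMeasure S μ) := by
  constructor
  rw [gaussMeasure, withDensity_apply _ MeasurableSet.univ, Measure.restrict_univ,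
    ← ofReal_integral_eq_lintegral_ofReal (integrable_gaussDensity hS μ)
      (.of_forall fun x => (gaussDensity_pos hS μ x).le), integral_gaussDensity hS μ,
    ENNReal.ofReal_one]

end GaussianMeasure

section Mixture

variable {α ι : Type*} [MeasurableSpace α] [Fintype ι] [DecidableEq ι]

lemma abs_toReal_sum_smul_apply_sub_le (ν : ι → Measure α) [∀ j, IsProbabilityMeasure (ν j)]
    {p : ι → ℝ} (hp : ∀ j, 0 ≤ p j) (hp_sum : ∑ j, p j = 1) (j₀ : ι) (B : Set α) :
    |((∑ j, ENNReal.ofReal (p j) • ν j) B).toReal - (ν j₀ B).toReal| ≤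
      ∑ j ∈ univ.erase j₀, p j := by
  have hmix : ((∑ j, ENNReal.ofReal (p j) • ν j) B).toReal = ∑ j, p j * (ν j B).toReal := by
    simp_rw [Measure.finsetSum_apply, Measure.smul_apply, smul_eq_mul]
    rw [ENNReal.toReal_sum fun j _ => ENNReal.mul_ne_top ENNReal.ofReal_ne_top (measure_ne_top _ _)]
    simp_rw [ENNReal.toReal_mul, ENNReal.toReal_ofReal (hp _)]
  have hsplit : ∑ j, p j * (ν j B).toReal - (ν j₀ B).toReal =
      ∑ j ∈ univ.erase j₀, p j * ((ν j B).toReal - (ν j₀ B).toReal) := by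
    rw [sum_erase univ (by rw [sub_self, mul_zero])]
    simp_rw [mul_sub, sum_sub_distrib, ← sum_mul, hp_sum, one_mul]
  have hle : ∀ j, (ν j B).toReal ≤ 1 := fun j => measureReal_le_one
  rw [hmix, hsplit]
  refine (abs_sum_le_sum_abs _ _).trans (sum_le_sum fun j _ => ?_)
  rw [abs_mul, abs_of_nonneg (hp j)]
  refine mul_le_of_le_one_right (hp j) (abs_sub_le_iff.2 ⟨?_, ?_⟩) <;>
    linarith [(ν j B).toReal_nonneg, (ν j₀ B).toReal_nonneg, hle j, hle j₀]

end Mixture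

lemma div_sum_mul_exp_neg_le {ι : Type*} [Fintype ι] {w ℓ : ι → ℝ} (hw : ∀ i, 0 < w i) (j k : ι) :
    w j * exp (-ℓ j) / ∑ i, w i * exp (-ℓ i) ≤ w j / w k * exp (ℓ k - ℓ j) := by
  calc w j * exp (-ℓ j) / ∑ i, w i * exp (-ℓ i) ≤ w j * exp (-ℓ j) / (w k * exp (-ℓ k)) := by
        gcongr
        · exact (mul_pos (hw j) (exp_pos _)).le
        · exact mul_pos (hw k) (exp_pos _)
        · exact single_le_sum (f := fun i => w i * exp (-ℓ i))
            (fun i _ => (mul_pos (hw i) (exp_pos _)).le) (mem_univ k)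
    _ = w j / w k * exp (ℓ k - ℓ j) := by
        rw [sub_eq_add_neg, exp_add, exp_neg (ℓ k)]
        field_simp

theorem stmt_3_general (m n M : ℕ) (hm : 0 < m)
    (ystar : Fin m → ℝ) (A : Matrix (Fin m) (Fin n) ℝ)
    (σ : ℝ) (hσ : 0 < σ)
    (μ : Fin M → Fin n → ℝ) (τ : Fin M → ℝ) (hτ : ∀ j, 0 < τ j)
    (w : Fin M → ℝ) (hw : ∀ j, 0 < w j)
    -- Σ_j = σ² I_m + τ_j² A Aᵀ
    (Cov : Fin M → Matrix (Fin m) (Fin m) ℝ)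
    (hCov : ∀ j, Cov j =
      σ ^ 2 • (1 : Matrix (Fin m) (Fin m) ℝ) + (τ j) ^ 2 • (A * Aᵀ))
    -- scores s_j(y*)
    (s : Fin M → ℝ)
    (hs : ∀ j, s j =
      (1 / 2) * ((ystar - A *ᵥ μ j) ⬝ᵥ ((Cov j)⁻¹ *ᵥ (ystar - A *ᵥ μ j))))
    -- selection scores ℓ_j(y*)
    (ℓ : Fin M → ℝ)
    (hℓ : ∀ j, ℓ j = s j + (1 / 2) * Real.log (Cov j).det)
    -- normalized posterior weights
    (wt : Fin M → ℝ)
    (hwt : ∀ j, wt j =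
      w j * gaussDensity (Cov j) (A *ᵥ μ j) ystar /
        ∑ i, w i * gaussDensity (Cov i) (A *ᵥ μ i) ystar)
    -- posterior covariances Σ_{post,j} = (τ_j⁻² I_n + σ⁻² Aᵀ A)⁻¹
    (CovPost : Fin M → Matrix (Fin n) (Fin n) ℝ)
    (hCovPost : ∀ j, CovPost j =
      (((τ j) ^ 2)⁻¹ • (1 : Matrix (Fin n) (Fin n) ℝ) + (σ ^ 2)⁻¹ • (Aᵀ * A))⁻¹)
    -- posterior means m_j(y*) = Σ_{post,j}(τ_j⁻² μ_j + σ⁻² Aᵀ y*)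
    (mpost : Fin M → Fin n → ℝ)
    -- the posterior mixture π(· | y*) = ∑_j w̃_j N(m_j(y*), Σ_{post,j})
    (post : Measure (Fin n → ℝ))
    (hpost : post = ∑ j, ENNReal.ofReal (wt j) • gaussMeasure (CovPost j) (mpost j))
    -- (1) bounded weight ratio
    (C : ℝ) (hC : 1 < C)
    (hratio : ∀ i j, 1 / C ≤ w i / w j ∧ w i / w j ≤ C)
    -- (2) δ₀-identifiability in selection score
    (jstar : Fin M)
    (δ₀ : ℝ)
    (hgap : ∀ j, j ≠ jstar → δ₀ ≤ (ℓ j - ℓ jstar) / m) :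
    ∀ B : Set (Fin n → ℝ), MeasurableSet B →
      |(post B).toReal - ((gaussMeasure (CovPost jstar) (mpost jstar)) B).toReal| ≤
        C * M * Real.exp (-(m : ℝ) * δ₀) := by
  intro B _
  have hCovPD : ∀ j, (Cov j).PosDef := fun j =>
    hCov j ▸ posDef_smul_one_add_smul_mul_transpose (pow_pos hσ 2) (sq_nonneg _) A
  have : ∀ j, IsProbabilityMeasure (gaussMeasure (CovPost j) (mpost j)) := fun j =>
    isProbabilityMeasure_gaussMeasure (hCovPost j ▸ (posDef_smul_one_add_smul_transpose_mul
      (inv_pos.2 (pow_pos (hτ j) 2)) (inv_nonneg.2 (sq_nonneg σ)) A).inv) _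
  have hevidence : ∀ j, gaussDensity (Cov j) (A *ᵥ μ j) ystar =
      (2 * π) ^ (-(m : ℝ) / 2) * exp (-ℓ j) := fun j => by
    rw [gaussDensity_eq_mul_exp (hCovPD j).det_pos, Fintype.card_fin, hℓ, hs]
  have hwt_softmax : ∀ j, wt j = w j * exp (-ℓ j) / ∑ i, w i * exp (-ℓ i) := fun j => by
    simp_rw [hwt, hevidence, mul_left_comm (w _), ← mul_sum]
    exact mul_div_mul_left _ _ (by positivity)
  have hwt_le : ∀ j ∈ univ.erase jstar, wt j ≤ C * exp (-m * δ₀) := fun j hj => by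
    have hδ := (le_div_iff₀ (by exact_mod_cast hm)).1 (hgap j (ne_of_mem_erase hj))
    rw [hwt_softmax]
    refine (div_sum_mul_exp_neg_le hw j jstar).trans (mul_le_mul (hratio j jstar).2 ?_
      (exp_pos _).le (by linarith))
    exact exp_le_exp.2 (by linarith)
  have hZ : 0 < ∑ i, w i * exp (-ℓ i) :=
    sum_pos (fun i _ => mul_pos (hw i) (exp_pos _)) ⟨jstar, mem_univ _⟩
  have hwt_nonneg : ∀ j, 0 ≤ wt j := fun j =>
    hwt_softmax j ▸ div_nonneg (mul_pos (hw j) (exp_pos _)).le hZ.le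
  have hwt_sum : ∑ j, wt j = 1 := by simp_rw [hwt_softmax, ← sum_div, div_self hZ.ne']
  calc _ ≤ ∑ j ∈ univ.erase jstar, wt j :=
        hpost ▸ abs_toReal_sum_smul_apply_sub_le _ hwt_nonneg hwt_sum jstar B
    _ ≤ ∑ _j ∈ univ.erase jstar, C * exp (-m * δ₀) := sum_le_sum hwt_le
    _ ≤ ∑ _j : Fin M, C * exp (-m * δ₀) :=
        sum_le_sum_of_subset_of_nonneg (erase_subset _ _) fun _ _ _ => by positivity
    _ = C * M * exp (-m * δ₀) := by
        rw [sum_const, card_univ, Fintype.card_fin, nsmul_eq_mul]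
        ring

/-- Posterior collapse in total variation to the best selection-score mode for a
heterogeneous-variance Gaussian-mixture prior under a linear Gaussian measurement
model.  The total-variation bound is stated as a uniform bound over measurable sets. -/
theorem stmt_3 (m n M : ℕ) (hm : 0 < m)
    (ystar : Fin m → ℝ) (A : Matrix (Fin m) (Fin n) ℝ)
    (σ : ℝ) (hσ : 0 < σ)
    (μ : Fin M → Fin n → ℝ) (τ : Fin M → ℝ) (hτ : ∀ j, 0 < τ j)
    (w : Fin M → ℝ) (hw : ∀ j, 0 < w j) (hwsum : ∑ j, w j = 1)
    -- Σ_j = σ² I_m + τ_j² A Aᵀ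
    (Cov : Fin M → Matrix (Fin m) (Fin m) ℝ)
    (hCov : ∀ j, Cov j =
      σ ^ 2 • (1 : Matrix (Fin m) (Fin m) ℝ) + (τ j) ^ 2 • (A * Aᵀ))
    -- scores s_j(y*)
    (s : Fin M → ℝ)
    (hs : ∀ j, s j =
      (1 / 2) * ((ystar - A *ᵥ μ j) ⬝ᵥ ((Cov j)⁻¹ *ᵥ (ystar - A *ᵥ μ j))))
    -- selection scores ℓ_j(y*)
    (ℓ : Fin M → ℝ)
    (hℓ : ∀ j, ℓ j = s j + (1 / 2) * Real.log (Cov j).det)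
    -- normalized posterior weights
    (wt : Fin M → ℝ)
    (hwt : ∀ j, wt j =
      w j * gaussDensity (Cov j) (A *ᵥ μ j) ystar /
        ∑ i, w i * gaussDensity (Cov i) (A *ᵥ μ i) ystar)
    -- posterior covariances Σ_{post,j} = (τ_j⁻² I_n + σ⁻² Aᵀ A)⁻¹
    (CovPost : Fin M → Matrix (Fin n) (Fin n) ℝ)
    (hCovPost : ∀ j, CovPost j =
      (((τ j) ^ 2)⁻¹ • (1 : Matrix (Fin n) (Fin n) ℝ) + (σ ^ 2)⁻¹ • (Aᵀ * A))⁻¹)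
    -- posterior means m_j(y*) = Σ_{post,j}(τ_j⁻² μ_j + σ⁻² Aᵀ y*)
    (mpost : Fin M → Fin n → ℝ)
    (hmpost : ∀ j, mpost j =
      (CovPost j) *ᵥ (((τ j) ^ 2)⁻¹ • μ j + (σ ^ 2)⁻¹ • (Aᵀ *ᵥ ystar)))
    -- the posterior mixture π(· | y*) = ∑_j w̃_j N(m_j(y*), Σ_{post,j})
    (post : Measure (Fin n → ℝ))
    (hpost : post = ∑ j, ENNReal.ofReal (wt j) • gaussMeasure (CovPost j) (mpost j))
    -- (1) bounded weight ratio
    (C : ℝ) (hC : 1 < C)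
    (hratio : ∀ i j, 1 / C ≤ w i / w j ∧ w i / w j ≤ C)
    -- (2) δ₀-identifiability in selection score
    (jstar : Fin M) (hmin : ∀ j, j ≠ jstar → ℓ jstar < ℓ j)
    (δ₀ : ℝ) (hδ₀ : 0 < δ₀)
    (hgap : ∀ j, j ≠ jstar → δ₀ ≤ (ℓ j - ℓ jstar) / m) :
    ∀ B : Set (Fin n → ℝ), MeasurableSet B →
      |(post B).toReal - ((gaussMeasure (CovPost jstar) (mpost jstar)) B).toReal| ≤
        C * M * Real.exp (-(m : ℝ) * δ₀) :=
  stmt_3_general m n M hm ystar A σ hσ μ τ hτ w hw Cov hCov s hs ℓ hℓ wt hwt CovPost hCovPost mpost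
    post hpost C hC hratio jstar δ₀ hgap
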